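/- arXiv:2310.02577 — 6 statements merged into one kernel-verified Lean document; each statement's English description precedes it below -/
import Mathlib

section
/- Let G be a group and x, y ∈ G with [x^n, y^m] = 1 for some positive integers n, m. Then the identity 1 = [x^n, y^m] can be written as a product of nm conjugates of [x,y]; in particular, if [x,y] ≠ 1 then [x,y] is a generalized torsion element and nm ∈ t([x,y]). -/
open scoped commutatorElement

/-- The generalized torsion equation spectrum of `g`. -/
def gts {G : Type*} [Group G] (g : G) : Set ℕ :=
  {n | 0 < n ∧ ∃ x : Fin n → G, (List.ofFn fun i => x i * g * (x i)⁻¹).prod = 1}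

/-!
By `⁅x, y * b⁆ = ⁅x, y⁆ * y ⁅x, b⁆ y⁻¹`, induction on `m` writes `⁅x, y ^ m⁆` as a product of `m`
conjugates of `⁅x, y⁆`; by `⁅a * b, c⁆ = a ⁅b, c⁆ a⁻¹ * ⁅a, c⁆`, induction on `n` then writes
`⁅x ^ n, y ^ m⁆` as a product of `n * m` of them. When `⁅x ^ n, y ^ m⁆ = 1` this is a generalized
torsion relation of length `n * m`.
-/

section ProdOfConj

variable {G : Type*} [Group G]

def IsProdOfConj (c : G) (k : ℕ) (t : G) : Prop :=
  ∃ z : Fin k → G, (List.ofFn fun i => z i * c * (z i)⁻¹).prod = t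

theorem isProdOfConj_zero (c : G) : IsProdOfConj c 0 1 :=
  ⟨Fin.elim0, rfl⟩

theorem isProdOfConj_one (c : G) : IsProdOfConj c 1 c :=
  ⟨fun _ => 1, by simp⟩

theorem IsProdOfConj.mul {c s t : G} {k l : ℕ} (hs : IsProdOfConj c k s)
    (ht : IsProdOfConj c l t) : IsProdOfConj c (k + l) (s * t) := by
  obtain ⟨z, rfl⟩ := hs
  obtain ⟨w, rfl⟩ := ht
  refine ⟨Fin.append z w, ?_⟩
  rw [← List.prod_append, ← List.ofFn_fin_append]
  congr 2
  ext i
  refine Fin.addCases (fun i => ?_) (fun i => ?_) i <;> simp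

theorem IsProdOfConj.conj {c t : G} {k : ℕ} (u : G) (ht : IsProdOfConj c k t) :
    IsProdOfConj c k (u * t * u⁻¹) := by
  obtain ⟨z, rfl⟩ := ht
  refine ⟨fun i => u * z i, ?_⟩
  have hconj := (map_list_prod (MulAut.conj u) (List.ofFn fun i => z i * c * (z i)⁻¹)).symm
  simpa [MulAut.conj_apply, List.map_ofFn, Function.comp_def, mul_assoc] using hconj

theorem isProdOfConj_commutatorElement_pow_right (x y : G) (m : ℕ) :
    IsProdOfConj ⁅x, y⁆ m ⁅x, y ^ m⁆ := by
  induction m with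
  | zero => simpa using isProdOfConj_zero ⁅x, y⁆
  | succ m ih =>
    rw [pow_succ', commutatorElement_mul_right_eq_mul_conj, add_comm]
    simpa only [mul_assoc] using (isProdOfConj_one _).mul (ih.conj y)

theorem isProdOfConj_commutatorElement_pow_pow (x y : G) (n m : ℕ) :
    IsProdOfConj ⁅x, y⁆ (n * m) ⁅x ^ n, y ^ m⁆ := by
  induction n with
  | zero => simpa using isProdOfConj_zero ⁅x, y⁆
  | succ n ih =>
    rw [pow_succ, commutatorElement_mul_left_eq_conj_mul, add_mul, one_mul, add_comm]
    exact ((isProdOfConj_commutatorElement_pow_right x y m).conj (x ^ n)).mul ih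

end ProdOfConj

theorem stmt_5 {G : Type*} [Group G] (x y : G) (n m : ℕ)
    (hn : 0 < n) (hm : 0 < m) (hc : ⁅x ^ n, y ^ m⁆ = 1) :
    (∃ z : Fin (n * m) → G, ⁅x ^ n, y ^ m⁆ = (List.ofFn fun i => z i * ⁅x, y⁆ * (z i)⁻¹).prod) ∧
      (⁅x, y⁆ ≠ 1 → n * m ∈ gts ⁅x, y⁆) := by
  obtain ⟨z, hz⟩ := isProdOfConj_commutatorElement_pow_pow x y n m
  exact ⟨⟨z, hz.symm⟩, fun _ => ⟨Nat.mul_pos hn hm, z, hz.trans hc⟩⟩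
end

section
/- A group G is an R-group (x^n = y^n with n ≥ 1 implies x = y) if and only if G is torsion-free and for all x, y ∈ G and all n, m ≥ 1, [x^n, y^m] = 1 implies [x,y] = 1. -/
/-!
Conjugating by `y` shows `(y x y⁻¹)ⁿ = y xⁿ y⁻¹`, so in a group with unique roots `xⁿ` commutes with
`y` only if `x` does; applying this once to each side of `⁅xⁿ, yᵐ⁆ = 1` gives `⁅x, y⁆ = 1`. Conversely,
if `xⁿ = yⁿ` then `xⁿ` commutes with `yⁿ`, hence `x` with `y`, and then `(x y⁻¹)ⁿ = xⁿ y⁻ⁿ = 1` forces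
`x = y` by torsion-freeness.
-/

open scoped commutatorElement

section

variable {G : Type*} [Group G]

theorem Commute.of_pow_left {x y : G} {n : ℕ} (hinj : ∀ a b : G, a ^ n = b ^ n → a = b)
    (h : Commute (x ^ n) y) : Commute x y := by
  have hconj : (y * x * y⁻¹) ^ n = x ^ n := by
    rw [conj_pow, h.symm.eq, mul_inv_cancel_right]
  exact (mul_inv_eq_iff_eq_mul.mp (hinj _ _ hconj)).symm

theorem Commute.of_pow_right {x y : G} {n : ℕ} (hinj : ∀ a b : G, a ^ n = b ^ n → a = b)
    (h : Commute x (y ^ n)) : Commute x y :=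
  (h.symm.of_pow_left hinj).symm

theorem Commute.eq_of_pow_eq {x y : G} {n : ℕ} (htf : ∀ g : G, g ^ n = 1 → g = 1)
    (hc : Commute x y) (h : x ^ n = y ^ n) : x = y := by
  have hquot : (x * y⁻¹) ^ n = 1 := by
    rw [hc.inv_right.mul_pow, h, inv_pow, mul_inv_cancel]
  exact mul_inv_eq_one.mp (htf _ hquot)

end

theorem stmt_7 {G : Type*} [Group G] :
    (∀ (x y : G) (n : ℕ), 1 ≤ n → x ^ n = y ^ n → x = y) ↔
      ((∀ (g : G) (n : ℕ), 1 ≤ n → g ^ n = 1 → g = 1) ∧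
        ∀ (x y : G) (n m : ℕ), 1 ≤ n → 1 ≤ m → ⁅x ^ n, y ^ m⁆ = 1 → ⁅x, y⁆ = 1) := by
  simp only [commutatorElement_eq_one_iff_commute]
  constructor
  · intro hR
    refine ⟨fun g n hn hg => hR g 1 n hn (by rwa [one_pow]), fun x y n m hn hm hc => ?_⟩
    exact (hc.of_pow_right (hR · · m hm)).of_pow_left (hR · · n hn)
  · rintro ⟨htf, hcom⟩ x y n hn h
    have hxy : Commute x y := hcom x y n n hn hn (h ▸ Commute.refl _)
    exact hxy.eq_of_pow_eq (htf · n hn) h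
end

section
/- A group G has an element g ≠ 1 with 2 ∈ t(g) (a generalized torsion element of generalized torsion order two) if and only if there exist x, y ∈ G with x^2 = y^2 but x ≠ y. -/
/-!
An equation `g^a * g^b = 1` conjugates, by `a⁻¹`, to `g * g^c = 1` with `c = a⁻¹ * b`, so
`2 ∈ t(g)` says exactly that `g` is conjugate to `g⁻¹`. On the other hand `x^2 = y^2` holds iff
`x` conjugates `x⁻¹ * y` to its inverse, and `x ≠ y` iff `x⁻¹ * y ≠ 1`.
-/

section

variable {G : Type*} [Group G]

theorem two_mem_gts_iff_isConj_inv (g : G) : 2 ∈ gts g ↔ IsConj g g⁻¹ := by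
  simp only [gts, Set.mem_ofPred_eq, List.ofFn_succ, List.ofFn_zero, List.prod_cons,
    List.prod_nil, mul_one, Fin.succ_zero_eq_one, isConj_iff]
  constructor
  · rintro ⟨-, x, hx⟩
    refine ⟨(x 0)⁻¹ * x 1, ?_⟩
    calc (x 0)⁻¹ * x 1 * g * ((x 0)⁻¹ * x 1)⁻¹
        = (x 0)⁻¹ * (x 1 * g * (x 1)⁻¹) * x 0 := by group
      _ = (x 0)⁻¹ * (x 0 * g * (x 0)⁻¹)⁻¹ * x 0 := by rw [eq_inv_of_mul_eq_one_right hx]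
      _ = g⁻¹ := by group
  · rintro ⟨c, hc⟩
    refine ⟨two_pos, ![1, c], ?_⟩
    simp [hc]

theorem sq_eq_sq_iff_conj_inv_mul_eq_inv (x y : G) :
    x ^ 2 = y ^ 2 ↔ x * (x⁻¹ * y) * x⁻¹ = (x⁻¹ * y)⁻¹ := by
  rw [mul_inv_cancel_left, mul_inv_rev, inv_inv, mul_inv_eq_iff_eq_mul, mul_assoc,
    eq_inv_mul_iff_mul_eq, ← sq, ← sq, eq_comm]

end

theorem stmt_9 {G : Type*} [Group G] :
    (∃ g : G, g ≠ 1 ∧ 2 ∈ gts g) ↔ ∃ x y : G, x ^ 2 = y ^ 2 ∧ x ≠ y := by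
  simp only [two_mem_gts_iff_isConj_inv, isConj_iff]
  constructor
  · rintro ⟨g, hg, c, hc⟩
    refine ⟨c, c * g, ?_, ?_⟩
    · rwa [sq_eq_sq_iff_conj_inv_mul_eq_inv, inv_mul_cancel_left]
    · simpa using hg
  · rintro ⟨x, y, hxy, hne⟩
    exact ⟨x⁻¹ * y, by simpa [inv_mul_eq_one] using hne,
      x, (sq_eq_sq_iff_conj_inv_mul_eq_inv x y).mp hxy⟩
end

section
/- For elements g_1,...,g_n of a group G and any k ≥ 1, the element (g_1 g_2 \cdots g_n)^{2k} can be written as g_1^{2k} g_2^{2k} \cdots g_n^{2k} multiplied by a product of at most (n-1)k commutators. -/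
/-!
The case of two factors carries the argument: `(xy)² x^m y^m = x^(m+2) y^(m+2) ⁅u, v⁆` for
explicit `u, v`, so peeling off one `(xy)²` at a time writes `(xy)^(2k)` as `x^(2k) y^(2k)` times
`k` commutators. For `n` factors, split off the first one and apply the two-factor case to it and
the product of the others; each of the `n - 1` splittings costs `k` commutators.
-/

open scoped commutatorElement

section

variable {G : Type*} [Group G]

def IsProdCommutators (m : ℕ) (z : G) : Prop :=
  ∃ a b : Fin m → G, (List.ofFn fun j => ⁅a j, b j⁆).prod = z

theorem isProdCommutators_zero_one : IsProdCommutators 0 (1 : G) :=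
  ⟨Fin.elim0, Fin.elim0, rfl⟩

theorem isProdCommutators_one_commutatorElement (u v : G) : IsProdCommutators 1 ⁅u, v⁆ :=
  ⟨fun _ => u, fun _ => v, by simp⟩

theorem IsProdCommutators.mul {m n : ℕ} {x y : G} (hx : IsProdCommutators m x)
    (hy : IsProdCommutators n y) : IsProdCommutators (m + n) (x * y) := by
  obtain ⟨a, b, rfl⟩ := hx
  obtain ⟨a', b', rfl⟩ := hy
  refine ⟨Fin.append a a', Fin.append b b', ?_⟩
  simp [List.ofFn_add, Fin.append_right]

theorem mul_sq_mul_pow_mul_pow (x y : G) (m : ℕ) :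
    (x * y) ^ 2 * x ^ m * y ^ m = x ^ (m + 2) * y ^ (m + 2) *
      ⁅(y ^ (m + 2))⁻¹ * (x ^ (m + 1))⁻¹ * y ^ (m + 1), (y ^ m)⁻¹ * (x ^ m)⁻¹ * y ^ (m + 1)⁆ := by
  rw [pow_two]
  group

theorem exists_mul_pow_two_mul_eq (x y : G) (k : ℕ) :
    ∃ c, IsProdCommutators k c ∧ (x * y) ^ (2 * k) = x ^ (2 * k) * y ^ (2 * k) * c := by
  induction k with
  | zero => exact ⟨1, isProdCommutators_zero_one, by simp⟩
  | succ k ih =>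
    obtain ⟨c, hc, hxy⟩ := ih
    obtain ⟨d, hd, hsq⟩ : ∃ d, IsProdCommutators 1 d ∧
        (x * y) ^ 2 * x ^ (2 * k) * y ^ (2 * k) = x ^ (2 * k + 2) * y ^ (2 * k + 2) * d :=
      ⟨_, isProdCommutators_one_commutatorElement _ _, mul_sq_mul_pow_mul_pow x y (2 * k)⟩
    refine ⟨d * c, add_comm 1 k ▸ hd.mul hc, ?_⟩
    calc (x * y) ^ (2 * (k + 1)) = (x * y) ^ 2 * x ^ (2 * k) * y ^ (2 * k) * c := by
          rw [mul_add, mul_one, add_comm, pow_add, hxy]; simp only [mul_assoc]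
      _ = x ^ (2 * (k + 1)) * y ^ (2 * (k + 1)) * (d * c) := by
          rw [hsq, mul_add, mul_one, mul_assoc]

theorem List.exists_prod_cons_pow_two_mul_eq (x : G) (T : List G) (k : ℕ) :
    ∃ c, IsProdCommutators (T.length * k) c ∧
      (x :: T).prod ^ (2 * k) = ((x :: T).map (· ^ (2 * k))).prod * c := by
  induction T generalizing x with
  | nil => exact ⟨1, by simpa using isProdCommutators_zero_one, by simp⟩
  | cons y T ih =>
    obtain ⟨c₁, hc₁, hx⟩ := exists_mul_pow_two_mul_eq x (y :: T).prod k
    obtain ⟨c₂, hc₂, hy⟩ := ih y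
    refine ⟨c₂ * c₁, (Nat.succ_mul _ _).symm ▸ hc₂.mul hc₁, ?_⟩
    rw [List.prod_cons, hx, hy]
    simp only [List.map_cons, List.prod_cons, mul_assoc]

end

theorem stmt_11_general {G : Type*} [Group G] (n k : ℕ) (g : Fin n → G) :
    ∃ a b : Fin ((n - 1) * k) → G,
      (List.ofFn g).prod ^ (2 * k) = (List.ofFn fun i => g i ^ (2 * k)).prod * (List.ofFn fun j => ⁅a j, b j⁆).prod := by
  suffices ∃ c, IsProdCommutators ((n - 1) * k) c ∧
      (List.ofFn g).prod ^ (2 * k) = (List.ofFn fun i => g i ^ (2 * k)).prod * c by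
    obtain ⟨c, ⟨a, b, rfl⟩, h⟩ := this
    exact ⟨a, b, h⟩
  cases n with
  | zero => exact ⟨1, by simpa using isProdCommutators_zero_one, by simp⟩
  | succ n =>
    obtain ⟨c, hc, h⟩ := List.exists_prod_cons_pow_two_mul_eq (g 0) (List.ofFn fun i => g i.succ) k
    refine ⟨c, by simpa using hc, ?_⟩
    rw [List.ofFn_succ, h, List.map_cons, List.map_ofFn, List.ofFn_succ]
    rfl

theorem stmt_11 {G : Type*} [Group G] (n k : ℕ) (hk : 1 ≤ k) (g : Fin n → G) :
    ∃ a b : Fin ((n - 1) * k) → G,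
      (List.ofFn g).prod ^ (2 * k) = (List.ofFn fun i => g i ^ (2 * k)).prod * (List.ofFn fun j => ⁅a j, b j⁆).prod :=
  stmt_11_general n k g
end

section
/- Let N be a normal subgroup of G, and let ν: N → ℝ_{≥0} be a G-invariant norm (ν(gag^{-1}) = ν(a) for g ∈ G, a ∈ N, and ν(ab) ≤ ν(a)+ν(b)). If C := sup{ν([s,t]) : s,t ∈ N} < ∞, then the stabilization \bar{ν}(g) := lim_{n→∞} ν(g^n)/n satisfies \bar{ν}(gh) ≤ \bar{ν}(g) + \bar{ν}(h) + C/2 for all g, h ∈ N. -/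
open Filter Topology
open scoped commutatorElement

/-!
Write `(gh)ⁿ = dₙ · gⁿhⁿ`. The defects satisfy `dₙ₊₂ = (conjugate of a commutator) · (conjugate of dₙ)`,
so for a conjugation-invariant subadditive `ν` with `ν ⁅s, t⁆ ≤ C` we get `ν dₙ ≤ ⌊n/2⌋ C + ν 1`.
Hence `ν ((gh)ⁿ) ≤ ν (gⁿ) + ν (hⁿ) + n C / 2 + ν 1`; divide by `n` and let `n → ∞`.
-/

namespace ConjInvariantNorm

variable {H : Type*} [Group H]

def powMulDefect (g h : H) (n : ℕ) : H := (g * h) ^ n * (h ^ n)⁻¹ * (g ^ n)⁻¹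

theorem mul_pow_eq_powMulDefect_mul (g h : H) (n : ℕ) :
    (g * h) ^ n = powMulDefect g h n * (g ^ n * h ^ n) := by
  simp only [powMulDefect]
  group

theorem powMulDefect_zero (g h : H) : powMulDefect g h 0 = 1 := by
  simp [powMulDefect]

theorem powMulDefect_one (g h : H) : powMulDefect g h 1 = 1 := by
  simp only [powMulDefect]
  group

theorem powMulDefect_add_two (g h : H) (n : ℕ) :
    ∃ x y : H, powMulDefect g h (n + 2) =
      ((g * h) ^ (n + 2) * ⁅x, y⁆ * ((g * h) ^ (n + 2))⁻¹) *
        ((g * h) ^ 2 * powMulDefect g h n * ((g * h) ^ 2)⁻¹) := by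
  set x := (h ^ (n + 1))⁻¹ * g ^ n * h ^ n
  set y := (h ^ n)⁻¹ * (g ^ n)⁻¹ * h⁻¹ * g⁻¹ * h ^ n
  have hxy : ⁅x, y⁆ = (h ^ (n + 2))⁻¹ * ((g ^ (n + 2))⁻¹ * ((g * h) ^ 2 * (g ^ n * h ^ n))) := by
    simp only [x, y, commutatorElement_def, pow_two]
    group
  refine ⟨x, y, ?_⟩
  simp only [powMulDefect, hxy]
  group

variable {ν : H → ℝ}

theorem zero_le_apply_one (hsub : ∀ a b, ν (a * b) ≤ ν a + ν b) : 0 ≤ ν 1 := by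
  have := hsub 1 1
  rw [one_mul] at this
  linarith

theorem apply_powMulDefect_le (hconj : ∀ z x, ν (z * x * z⁻¹) = ν x)
    (hsub : ∀ a b, ν (a * b) ≤ ν a + ν b) {C : ℝ} (hC : ∀ s t : H, ν ⁅s, t⁆ ≤ C) (g h : H)
    (n : ℕ) : ν (powMulDefect g h n) ≤ (n / 2 : ℕ) * C + ν 1 := by
  induction n using Nat.twoStepInduction with
  | zero => simp [powMulDefect_zero]
  | one => simp [powMulDefect_one]
  | more n ih _ =>
    obtain ⟨x, y, hd⟩ := powMulDefect_add_two g h n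
    have hstep : ν (powMulDefect g h (n + 2)) ≤ C + ν (powMulDefect g h n) := by
      rw [hd]
      refine (hsub _ _).trans ?_
      rw [hconj, hconj]
      exact add_le_add_left (hC x y) _
    rw [Nat.add_div_right n two_pos]
    push_cast
    linarith

theorem apply_mul_pow_le (hconj : ∀ z x, ν (z * x * z⁻¹) = ν x)
    (hsub : ∀ a b, ν (a * b) ≤ ν a + ν b) {C : ℝ} (hC : ∀ s t : H, ν ⁅s, t⁆ ≤ C) (g h : H) (n : ℕ) :
    ν ((g * h) ^ n) ≤ ν (g ^ n) + ν (h ^ n) + n * (C / 2) + ν 1 := by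
  have hC₀ : 0 ≤ C := by
    have := hC 1 1
    rw [commutatorElement_one_left] at this
    linarith [zero_le_apply_one hsub]
  have hfloor : ((n / 2 : ℕ) : ℝ) * C ≤ n * (C / 2) := by
    rw [← mul_div_assoc, le_div_iff₀ two_pos, mul_right_comm]
    gcongr
    exact_mod_cast Nat.div_mul_le_self n 2
  have hd := apply_powMulDefect_le hconj hsub hC g h n
  have hsplit : ν ((g * h) ^ n) ≤ ν (powMulDefect g h n) + (ν (g ^ n) + ν (h ^ n)) := by
    rw [mul_pow_eq_powMulDefect_mul]
    exact (hsub _ _).trans (by gcongr; exact hsub _ _)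
  linarith

theorem stabilization_mul_le (hconj : ∀ z x, ν (z * x * z⁻¹) = ν x)
    (hsub : ∀ a b, ν (a * b) ≤ ν a + ν b) {C : ℝ} (hC : ∀ s t : H, ν ⁅s, t⁆ ≤ C) {barν : H → ℝ}
    (hbar : ∀ a, Tendsto (fun n : ℕ => ν (a ^ n) / n) atTop (𝓝 (barν a))) (g h : H) :
    barν (g * h) ≤ barν g + barν h + C / 2 := by
  have hlim : Tendsto (fun n : ℕ => ν (g ^ n) / n + ν (h ^ n) / n + C / 2 + ν 1 / n) atTop
      (𝓝 (barν g + barν h + C / 2 + 0)) :=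
    (((hbar g).add (hbar h)).add tendsto_const_nhds).add
      (tendsto_const_div_atTop_nhds_zero_nat (ν 1))
  rw [add_zero] at hlim
  refine le_of_tendsto_of_tendsto (hbar (g * h)) hlim (eventually_atTop.2 ⟨1, fun n hn => ?_⟩)
  have hn : (0 : ℝ) < n := by exact_mod_cast hn
  calc ν ((g * h) ^ n) / n ≤ (ν (g ^ n) + ν (h ^ n) + n * (C / 2) + ν 1) / n := by
        gcongr
        exact apply_mul_pow_le hconj hsub hC g h n
    _ = ν (g ^ n) / n + ν (h ^ n) / n + C / 2 + ν 1 / n := by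
        field_simp

end ConjInvariantNorm

theorem stmt_12_general {G : Type*} [Group G] (N : Subgroup G)
    (ν : N → ℝ)
    (hinv : ∀ (g : G) (a b : N), (b : G) = g * (a : G) * g⁻¹ → ν b = ν a)
    (hsub : ∀ a b : N, ν (a * b) ≤ ν a + ν b)
    (C : ℝ) (hC : IsLUB {r | ∃ s t : N, r = ν ⁅s, t⁆} C)
    (barν : N → ℝ)
    (hbar : ∀ a : N,
      Filter.Tendsto (fun n : ℕ => ν (a ^ n) / n) Filter.atTop (nhds (barν a)))
    (g h : N) : barν (g * h) ≤ barν g + barν h + C / 2 := by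
  have hconj : ∀ z x : N, ν (z * x * z⁻¹) = ν x := fun z x => hinv z x _ (by push_cast; rfl)
  exact ConjInvariantNorm.stabilization_mul_le hconj hsub (fun s t => hC.1 ⟨s, t, rfl⟩) hbar g h

theorem stmt_12 {G : Type*} [Group G] (N : Subgroup G) [N.Normal]
    (ν : N → ℝ) (hnonneg : ∀ a : N, 0 ≤ ν a)
    (hinv : ∀ (g : G) (a b : N), (b : G) = g * (a : G) * g⁻¹ → ν b = ν a)
    (hsub : ∀ a b : N, ν (a * b) ≤ ν a + ν b)
    (C : ℝ) (hC : IsLUB {r | ∃ s t : N, r = ν ⁅s, t⁆} C)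
    (barν : N → ℝ)
    (hbar : ∀ a : N,
      Filter.Tendsto (fun n : ℕ => ν (a ^ n) / n) Filter.atTop (nhds (barν a)))
    (g h : N) : barν (g * h) ≤ barν g + barν h + C / 2 :=
  stmt_12_general N ν hinv hsub C hC barν hbar g h
end

section
/- Let h(t) = a_m t^m + ... + a_0 ∈ ℤ[t] with a_0, a_m ≠ 0 and m ≥ 1. If g(t)h(t) is a nonzero polynomial with all coefficients nonnegative, then g(1)h(1) ≥ |a_m| + |a_0|. -/
/-!
The coefficients of `g * h` in degrees `natDegree` and `natTrailingDegree` are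
`lc g * lc h` and `tc g * tc h`. Both are nonnegative, and since `g` has integer
coefficients they are at least `|lc h| = |a_m|` and `|tc h| = |a_0|` in absolute value.
Because `a_0 ≠ 0` and `m ≥ 1` these two degrees differ, so both coefficients occur
separately in the sum of the nonnegative coefficients of `g * h`, which is `g(1) h(1)`.
-/

open Polynomial

namespace Polynomial

theorem coeff_add_coeff_le_eval_one {R : Type*} [Semiring R] [PartialOrder R]
    [AddLeftMono R] {f : R[X]} (hf : ∀ i, 0 ≤ f.coeff i) {i j : ℕ} (hij : i ≠ j) :
    f.coeff i + f.coeff j ≤ f.eval 1 := by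
  have hlt : f.natDegree < max f.natDegree (max i j) + 1 := by omega
  rw [eval_eq_sum_range' hlt]
  simp only [one_pow, mul_one]
  exact Finset.add_le_sum (fun k _ ↦ hf k) (by simp) (by simp) hij

theorem natTrailingDegree_mul_lt_natDegree_mul {R : Type*} [Semiring R] [NoZeroDivisors R]
    {g h : R[X]} (hg : g ≠ 0) (hh : h.natTrailingDegree < h.natDegree) :
    (g * h).natTrailingDegree < (g * h).natDegree := by
  have h0 : h ≠ 0 := by rintro rfl; simp at hh
  rw [natTrailingDegree_mul hg h0, natDegree_mul hg h0]
  have := g.natTrailingDegree_le_natDegree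
  omega

theorem abs_leadingCoeff_le_abs_leadingCoeff_mul {g : ℤ[X]} (hg : g ≠ 0) (h : ℤ[X]) :
    |h.leadingCoeff| ≤ |(g * h).leadingCoeff| := by
  rw [leadingCoeff_mul, abs_mul]
  exact le_mul_of_one_le_left (abs_nonneg _) (Int.one_le_abs (leadingCoeff_ne_zero.mpr hg))

theorem abs_trailingCoeff_le_abs_trailingCoeff_mul {g : ℤ[X]} (hg : g ≠ 0) (h : ℤ[X]) :
    |h.trailingCoeff| ≤ |(g * h).trailingCoeff| := by
  rw [trailingCoeff_mul, abs_mul]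
  exact le_mul_of_one_le_left (abs_nonneg _)
    (Int.one_le_abs (mt trailingCoeff_eq_zero.mp hg))

end Polynomial

open Polynomial in
theorem stmt_16_general (h g : Polynomial ℤ) (m : ℕ) (hm : 1 ≤ m)
    (hdeg : h.natDegree = m) (h0 : h.coeff 0 ≠ 0)
    (hpos : g * h ≠ 0) (hcoeff : ∀ i : ℕ, 0 ≤ (g * h).coeff i) :
    g.eval 1 * h.eval 1 ≥ |h.coeff m| + |h.coeff 0| := by
  have hg : g ≠ 0 := left_ne_zero_of_mul hpos
  have htd : h.natTrailingDegree = 0 := natTrailingDegree_eq_zero.mpr (Or.inr h0)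
  have hlc : |h.coeff m| ≤ (g * h).leadingCoeff := by
    rw [leadingCoeff, ← abs_of_nonneg (hcoeff _), ← hdeg]
    exact abs_leadingCoeff_le_abs_leadingCoeff_mul hg h
  have htc : |h.coeff 0| ≤ (g * h).trailingCoeff := by
    rw [trailingCoeff, ← abs_of_nonneg (hcoeff _), ← htd]
    exact abs_trailingCoeff_le_abs_trailingCoeff_mul hg h
  have hne : (g * h).natDegree ≠ (g * h).natTrailingDegree :=
    (natTrailingDegree_mul_lt_natDegree_mul hg (by omega)).ne'
  calc |h.coeff m| + |h.coeff 0| ≤ (g * h).leadingCoeff + (g * h).trailingCoeff :=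
        add_le_add hlc htc
    _ ≤ (g * h).eval 1 := coeff_add_coeff_le_eval_one hcoeff hne
    _ = g.eval 1 * h.eval 1 := eval_mul

open Polynomial in
theorem stmt_16 (h g : Polynomial ℤ) (m : ℕ) (hm : 1 ≤ m)
    (hdeg : h.natDegree = m) (h0 : h.coeff 0 ≠ 0) (hlead : h.coeff m ≠ 0)
    (hpos : g * h ≠ 0) (hcoeff : ∀ i : ℕ, 0 ≤ (g * h).coeff i) :
    g.eval 1 * h.eval 1 ≥ |h.coeff m| + |h.coeff 0| :=
  stmt_16_general h g m hm hdeg h0 hpos hcoeff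
end
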